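/- arXiv:2401.14862 — 2 statements merged into one kernel-verified Lean document; each statement's English description precedes it below -/
import Mathlib

section
/- Let g₁, …, g_k be automorphisms of the infinite rooted binary tree. The product g₁⋯g_k is an odometer if and only if for every permutation τ ∈ S_k and every tuple of 2-adic units ℓ₁, …, ℓ_k ∈ ℤ₂^×, the product g_{τ(1)}^{ℓ₁}⋯g_{τ(k)}^{ℓ_k} is an odometer. -/
namespace BinTree

/-- Vertices of the infinite rooted binary tree: finite words over `{0,1}`. -/
abbrev Vertex : Type := List Bool

/-- A function on vertices is a tree automorphism function if it preserves lengths
(levels) and prefixes. -/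
def IsTreeAutFun (f : Vertex → Vertex) : Prop :=
  (∀ v, (f v).length = v.length) ∧ ∀ v w : Vertex, (f (v ++ w)).take v.length = f v

/-- `Ω`: the automorphism group of the infinite rooted binary tree, realized as the
subgroup of permutations of the set of vertices preserving the tree structure. -/
def TreeAut : Subgroup (Equiv.Perm Vertex) where
  carrier := {e | IsTreeAutFun ⇑e}
  one_mem' := ⟨fun _ => rfl, fun v w => by
    simpa using List.take_left (l₁ := v) (l₂ := w)⟩
  mul_mem' := by
    rintro a b ha hb
    obtain ⟨ha1, ha2⟩ := ha
    obtain ⟨hb1, hb2⟩ := hb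
    refine ⟨fun v => ?_, fun v w => ?_⟩
    · simp [Equiv.Perm.mul_apply, ha1, hb1]
    · have hb' : b (v ++ w) = b v ++ (b (v ++ w)).drop v.length := by
        conv_lhs => rw [← List.take_append_drop v.length (b (v ++ w)), hb2]
      have hlen : (b v).length = v.length := hb1 v
      calc ((a * b) (v ++ w)).take v.length
          = (a (b v ++ (b (v ++ w)).drop v.length)).take v.length := by
            rw [Equiv.Perm.mul_apply, ← hb']
        _ = a (b v) := by rw [← hlen]; exact ha2 _ _
        _ = (a * b) v := rfl
  inv_mem' := by
    intro a ha
    obtain ⟨ha1, ha2⟩ := ha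
    show IsTreeAutFun ⇑a⁻¹
    have hlen : ∀ v : Vertex, (a⁻¹ v).length = v.length := by
      intro v
      have h := ha1 (a⁻¹ v)
      rw [show ∀ x, a (a⁻¹ x) = x from a.apply_symm_apply] at h
      exact h.symm ▸ rfl
    refine ⟨hlen, fun v w => ?_⟩
    have htl : ((a⁻¹ (v ++ w)).take v.length).length = v.length := by
      rw [List.length_take, hlen, List.length_append]
      omega
    have key : a ((a⁻¹ (v ++ w)).take v.length) = v := by
      have h2 := ha2 ((a⁻¹ (v ++ w)).take v.length) ((a⁻¹ (v ++ w)).drop v.length)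
      rw [List.take_append_drop, htl, show ∀ x, a (a⁻¹ x) = x from a.apply_symm_apply] at h2
      rw [← h2]
      simpa using List.take_left (l₁ := v) (l₂ := w)
    have h3 := congrArg (⇑a⁻¹) key
    rwa [show ∀ x, a⁻¹ (a x) = x from a.symm_apply_apply] at h3

/-- wreath recursion, forward map: `(g,h)σᵗ` -/
def wrFun (g h : Vertex → Vertex) (t : Bool) : Vertex → Vertex
  | [] => []
  | x :: v => (xor x t) :: (cond x (h v) (g v))

/-- wreath recursion, inverse map -/
def wrFunInv (g h : Vertex → Vertex) (t : Bool) : Vertex → Vertex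
  | [] => []
  | y :: w => (xor y t) :: (cond (xor y t) (h w) (g w))

/-- `(g,h)σᵗ` as a permutation of the vertices. -/
def wrPerm (g h : Equiv.Perm Vertex) (t : Bool) : Equiv.Perm Vertex where
  toFun := wrFun ⇑g ⇑h t
  invFun := wrFunInv ⇑g.symm ⇑h.symm t
  left_inv := by
    intro v
    cases v with
    | nil => rfl
    | cons x v => cases x <;> cases t <;> simp [wrFun, wrFunInv]
  right_inv := by
    intro v
    cases v with
    | nil => rfl
    | cons x v => cases x <;> cases t <;> simp [wrFun, wrFunInv]

/-- The element `(g,h)σᵗ` of `Ω`: acts on the first level by `σᵗ` (where `σ` is the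
swap of the two level-one subtrees), with section `g` at the vertex `0` and section
`h` at the vertex `1`.  Thus `(γ₀,γ₁)τ` of the wreath recursion
`Ω ≃ (Ω × Ω) ⋊ S₂` is `wr γ₀ γ₁ t` (`t = true` iff `τ = σ`). -/
def wr (g h : TreeAut) (t : Bool) : TreeAut :=
  ⟨wrPerm g.1 h.1 t, by
    have hg : IsTreeAutFun ⇑g.1 := g.2
    have hh : IsTreeAutFun ⇑h.1 := h.2
    constructor
    · intro v
      cases v with
      | nil => rfl
      | cons x v =>
        cases x <;> simp [wrPerm, wrFun, hg.1, hh.1]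
    · intro v w
      cases v with
      | nil => simp [wrPerm, wrFun]
      | cons x v =>
        cases x <;> simp [wrPerm, wrFun, hg.2, hh.2]⟩

/-- Application of a tree automorphism to a vertex. -/
def ap (γ : TreeAut) (v : Vertex) : Vertex := γ.1 v

/-- The permutation induced by `γ ∈ Ω` on level `n` of the tree. -/
def levelPerm (n : ℕ) (γ : TreeAut) : Equiv.Perm (List.Vector Bool n) where
  toFun v := ⟨γ.1 v.1, by
    have h : IsTreeAutFun ⇑γ.1 := γ.2
    rw [h.1 v.1]; exact v.2⟩
  invFun v := ⟨γ.1.symm v.1, by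
    have h : IsTreeAutFun ⇑γ.1 := γ.2
    have h2 := h.1 (γ.1.symm v.1)
    rw [Equiv.apply_symm_apply] at h2
    exact h2.symm.trans v.2⟩
  left_inv v := Subtype.ext (Equiv.symm_apply_apply _ _)
  right_inv v := Subtype.ext (Equiv.apply_symm_apply _ _)

/-- Restriction to level `n` as a group homomorphism. -/
def levelHom (n : ℕ) : TreeAut →* Equiv.Perm (List.Vector Bool n) where
  toFun := levelPerm n
  map_one' := Equiv.ext fun v => Subtype.ext rfl
  map_mul' := fun g h => Equiv.ext fun v => Subtype.ext rfl

/-- `sgn_n`: the sign of the permutation induced on level `n`. -/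
def sgn (n : ℕ) (γ : TreeAut) : ℤˣ := Equiv.Perm.sign (levelPerm n γ)

/-- An odometer: acts as a single `2^n`-cycle on each level `n ≥ 1`. -/
def IsOdometer (γ : TreeAut) : Prop :=
  ∀ n : ℕ, 1 ≤ n → (levelPerm n γ).IsCycle ∧ (levelPerm n γ).support = Finset.univ

/-- The profinite topology on `Ω`: the coarsest topology making all level
restrictions (to the discrete finite groups) continuous. -/
instance : TopologicalSpace TreeAut :=
  ⨅ n : ℕ, TopologicalSpace.induced (levelPerm n) ⊥

/-- A vertex `w` is in a stable cycle of `γ` of length `k`: its `γ`-orbit has exactly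
`k` elements, and for every level `m` above the level of `w`, all level-`m` vertices
lying above this orbit are in one single `γ`-cycle (necessarily of length
`2^(m - n) * k`, which we record via the periodicity condition). -/
def InStableCycle (γ : TreeAut) (w : Vertex) (k : ℕ) : Prop :=
  0 < k ∧ ap (γ ^ k) w = w ∧ (∀ j : ℕ, 0 < j → j < k → ap (γ ^ j) w ≠ w) ∧
  (∀ u : Vertex, w.length < u.length → (∃ i : ℕ, u.take w.length = ap (γ ^ i) w) →
    (ap (γ ^ (2 ^ (u.length - w.length) * k)) u = u ∧
      ∀ u' : Vertex, u'.length = u.length →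
        (∃ i : ℕ, u'.take w.length = ap (γ ^ i) w) → ∃ j : ℕ, ap (γ ^ j) u = u'))

/-- Self-similar subgroup: closed under taking sections (here the section of `γ` at
the first-level vertex `x` is characterized by `(xv)γ = (x)γ ⬝ (v)γₓ`). -/
def SelfSimilar (H : Subgroup TreeAut) : Prop :=
  ∀ γ ∈ H, ∀ x : Bool, ∀ δ : TreeAut,
    (∀ v : Vertex, ap γ (x :: v) = ap γ [x] ++ ap δ v) → δ ∈ H

end BinTree

/-!
Each `sgn n` is a homomorphism to the abelian group `{±1}`, so it does not see the order of the
factors nor odd exponents, and the approximants `ℓ.appr m` of a `2`-adic unit are odd. Since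
convergence in `Ω` means eventual agreement on every level, all the products in question have the
same level signs as `g₁⋯g_k`. It remains that `γ` is an odometer iff `sgn n γ = -1` for all
`n ≥ 1`. Inductively, if `γ` is a `2ⁿ`-cycle on level `n`, every cycle of `γ` on level `n + 1`
has length divisible by `2ⁿ`, so `γ` has there either one cycle of length `2ⁿ⁺¹` or two of
length `2ⁿ`, and the sign tells the two cases apart.
-/

open Finset

namespace Equiv.Perm

section

variable {α : Type*} [Fintype α] [DecidableEq α] {σ : Perm α}

theorem dvd_of_mem_cycleType_of_forall_pow_apply_eq_self {N a : ℕ}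
    (hN : ∀ x p, (σ ^ p) x = x → N ∣ p) (ha : a ∈ σ.cycleType) : N ∣ a := by
  rw [cycleType_def, Multiset.mem_map] at ha
  obtain ⟨c, hc, rfl⟩ := ha
  obtain ⟨x, hx⟩ := (mem_cycleFactorsFinset_iff.mp hc).1.nonempty_support
  refine hN x _ ?_
  have := pow_mod_card_support_cycleOf_self_apply σ (#c.support) x
  rwa [← cycle_is_cycleOf hx hc, Nat.mod_self, pow_zero, one_apply, eq_comm] at this

/-- The sign `(-1) ^ (2N + #cycles)` forces an odd number of cycles, and there are at most two. -/
theorem isCycle_of_sign_eq_neg_one {N : ℕ} (hcard : Fintype.card α = 2 * N)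
    (hsupp : σ.support = univ) (hdvd : ∀ a ∈ σ.cycleType, N ∣ a) (hsign : sign σ = -1) :
    σ.IsCycle := by
  have hsum : σ.cycleType.sum = 2 * N := by rw [sum_cycleType, hsupp, card_univ, hcard]
  have hN : 0 < N := by
    by_contra! h0
    obtain rfl : σ = 1 := by
      rw [← support_eq_empty_iff, hsupp, univ_eq_empty_iff, ← Fintype.card_eq_zero_iff]; omega
    simp at hsign
  have hle : N * Multiset.card σ.cycleType ≤ N * 2 := by
    simpa [hsum, mul_comm] using Multiset.card_nsmul_le_sum fun a ha =>
      Nat.le_of_dvd (zero_lt_two.trans_le (two_le_of_mem_cycleType ha)) (hdvd a ha)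
  have hodd : Odd (Multiset.card σ.cycleType) := by
    rw [sign_of_cycleType, hsum, neg_one_pow_eq_neg_one_iff_odd (by decide), Nat.odd_add'] at hsign
    exact hsign.mpr (even_two_mul N)
  rw [← card_cycleType_eq_one]
  obtain ⟨j, hj⟩ := hodd
  have := Nat.le_of_mul_le_mul_left hle hN
  omega

theorem isCycle_and_support_eq_univ_of_card_eq_two (hα : Fintype.card α = 2) (hσ : σ ≠ 1) :
    σ.IsCycle ∧ σ.support = univ := by
  have h2 : #σ.support = 2 := by
    have := card_support_ne_one σ
    have := card_le_univ σ.support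
    have := card_support_eq_zero.not.mpr hσ
    omega
  exact ⟨(card_support_eq_two.mp h2).isCycle, eq_univ_of_card _ (h2.trans hα.symm)⟩

end

variable {α β : Type*} [Fintype β] [DecidableEq β] {σ : Perm α} {ρ : Perm β}
  {π : α → β}

theorem card_dvd_of_semiconj_of_pow_apply_eq_self (hπ : Function.Semiconj π σ ρ)
    (hρ : ρ.IsCycle) (hρs : ρ.support = univ) {x : α} {p : ℕ} (hx : (σ ^ p) x = x) :
    Fintype.card β ∣ p := by
  have hρx : (ρ ^ p) (π x) = π x := by
    rw [coe_pow, ← (hπ.iterate_right p).eq, ← coe_pow, hx]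
  have hρp : ρ ^ p = 1 :=
    (hρ.pow_eq_one_iff' (mem_support.mp (hρs ▸ mem_univ (π x)))).mpr hρx
  rw [← card_univ, ← hρs, ← hρ.orderOf]
  exact orderOf_dvd_of_pow_eq_one hρp

theorem isCycle_and_support_eq_univ_of_semiconj [Fintype α] [DecidableEq α]
    (hπ : Function.Semiconj π σ ρ) (hρ : ρ.IsCycle) (hρs : ρ.support = univ)
    (hcard : Fintype.card α = 2 * Fintype.card β) (hsign : sign σ = -1) :
    σ.IsCycle ∧ σ.support = univ := by
  have hsupp : σ.support = univ := by
    refine eq_univ_of_forall fun x => mem_support.mpr fun hx => ?_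
    have h1 := Nat.le_of_dvd one_pos <|
      card_dvd_of_semiconj_of_pow_apply_eq_self hπ hρ hρs (p := 1) (by simpa using hx)
    have h2 := hρ.two_le_card_support
    rw [hρs, card_univ] at h2
    omega
  refine ⟨isCycle_of_sign_eq_neg_one hcard hsupp (fun a ha => ?_) hsign, hsupp⟩
  exact dvd_of_mem_cycleType_of_forall_pow_apply_eq_self
    (fun _ _ => card_dvd_of_semiconj_of_pow_apply_eq_self hπ hρ hρs) ha

end Equiv.Perm

namespace PadicInt

variable {p : ℕ} [Fact p.Prime] {m : ℕ}

theorem appr_one (hm : m ≠ 0) : (1 : ℤ_[p]).appr m = 1 := by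
  have h : ((1 : ℤ_[p]).appr m : ZMod (p ^ m)) = 1 := map_one (toZModPow m)
  have := congrArg ZMod.val h
  rwa [ZMod.val_natCast_of_lt (appr_lt _ _), ZMod.val_one_eq_one_mod,
    Nat.one_mod_eq_one.mpr (Nat.one_lt_pow hm (Fact.out : p.Prime).one_lt).ne'] at this

theorem coprime_appr_of_isUnit {x : ℤ_[p]} (hx : IsUnit x) (hm : m ≠ 0) :
    (x.appr m).Coprime p := by
  have h : IsUnit ((x.appr m : ℕ) : ZMod (p ^ m)) := hx.map (toZModPow m)
  rwa [ZMod.isUnit_iff_coprime, Nat.coprime_pow_right_iff (Nat.pos_of_ne_zero hm)] at h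

end PadicInt

theorem MonoidHom.map_prod_ofFn_reverse {G M : Type*} [Monoid G] [CommMonoid M] (φ : G →* M)
    {k : ℕ} (f : Fin k → G) : φ (List.ofFn f).reverse.prod = ∏ i, φ (f i) := by
  rw [map_list_prod, List.map_reverse, List.prod_reverse, List.map_ofFn, List.prod_ofFn]
  rfl

theorem MonoidHom.map_prod_ofFn_perm_pow_odd {G : Type*} [Monoid G] (φ : G →* ℤˣ) {k : ℕ}
    (g : Fin k → G) (τ : Equiv.Perm (Fin k)) {e : Fin k → ℕ} (he : ∀ i, Odd (e i)) :
    φ (List.ofFn fun i => g (τ i) ^ e i).reverse.prod = φ (List.ofFn g).reverse.prod := by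
  have hpow : ∀ i, φ (g (τ i) ^ e i) = φ (g (τ i)) := fun i => by
    rw [map_pow, Int.units_pow_eq_pow_mod_two, Nat.odd_iff.mp (he i), pow_one]
  simp only [φ.map_prod_ofFn_reverse, hpow]
  exact Equiv.prod_comp τ fun i => φ (g i)

namespace BinTree

theorem take_apply (γ : TreeAut) {v : Vertex} {m : ℕ} (hm : m ≤ v.length) :
    (γ.1 v).take m = γ.1 (v.take m) := by
  have h := γ.2.2 (v.take m) (v.drop m)
  rwa [List.take_append_drop, List.length_take, min_eq_left hm] at h

def levelProj (n : ℕ) (v : List.Vector Bool (n + 1)) : List.Vector Bool n :=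
  ⟨v.1.take n, by simp [v.2]⟩

theorem semiconj_levelProj (n : ℕ) (γ : TreeAut) :
    Function.Semiconj (levelProj n) (levelPerm (n + 1) γ) (levelPerm n γ) :=
  fun v => Subtype.ext (take_apply γ (by simp [v.2]))

theorem card_level (n : ℕ) : Fintype.card (List.Vector Bool n) = 2 ^ n := by
  rw [card_vector, Fintype.card_bool]

theorem isOdometer_iff_sgn (γ : TreeAut) : IsOdometer γ ↔ ∀ n, 1 ≤ n → sgn n γ = -1 := by
  refine ⟨fun h n hn => ?_, fun h n hn => ?_⟩
  · obtain ⟨hcyc, hsupp⟩ := h n hn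
    rw [sgn, hcyc.sign, hsupp, card_univ, card_level,
      (Nat.even_pow.mpr ⟨even_two, by omega⟩).neg_one_pow]
  induction n, hn using Nat.le_induction with
  | base =>
    refine Equiv.Perm.isCycle_and_support_eq_univ_of_card_eq_two (card_level 1) fun h1 => ?_
    simpa [sgn, h1] using h 1 le_rfl
  | succ n _ ih =>
    refine Equiv.Perm.isCycle_and_support_eq_univ_of_semiconj (semiconj_levelProj n γ) ih.1 ih.2
      ?_ (h (n + 1) (by omega))
    rw [card_level, card_level, pow_succ, mul_comm]

def sgnHom (n : ℕ) : TreeAut →* ℤˣ := Equiv.Perm.sign.comp (levelHom n)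

theorem sgnHom_apply (n : ℕ) (γ : TreeAut) : sgnHom n γ = sgn n γ := rfl

theorem eventually_levelPerm_eq {ι : Type*} {l : Filter ι} {f : ι → TreeAut} {γ : TreeAut}
    (hf : Filter.Tendsto f l (nhds γ)) (n : ℕ) :
    ∀ᶠ i in l, levelPerm n (f i) = levelPerm n γ := by
  have hle : nhds γ ≤ Filter.comap (levelPerm n) (pure (levelPerm n γ)) := by
    refine (nhds_iInf (t := fun n => TopologicalSpace.induced (levelPerm n) ⊥)).trans_le
      (iInf_le_of_le n ?_)
    rw [@nhds_induced _ _ ⊥, @nhds_discrete _ ⊥ (discreteTopology_bot _)]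
  exact Filter.tendsto_pure.mp (Filter.tendsto_comap_iff.mp (hf.mono_right hle))

/-- The paper composes automorphisms left to right, so its word `x₁x₂⋯x_m` is
`(List.ofFn x).reverse.prod` here. -/
theorem prod_odometer_iff_perm_unit_pows_general (k : ℕ) (g : Fin k → TreeAut) :
    IsOdometer ((List.ofFn g).reverse.prod) ↔
      ∀ (τ : Equiv.Perm (Fin k)) (ℓ : Fin k → ℤ_[2]), (∀ i, IsUnit (ℓ i)) →
        ∀ h : TreeAut,
          Filter.Tendsto
            (fun m : ℕ =>
              (List.ofFn (fun i : Fin k => g (τ i) ^ ((ℓ i).appr m))).reverse.prod)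
            Filter.atTop (nhds h) →
          IsOdometer h := by
  refine ⟨fun hg τ ℓ hℓ h hlim => ?_, fun H => ?_⟩
  · rw [isOdometer_iff_sgn] at hg ⊢
    intro n hn
    obtain ⟨m, hm, hm0⟩ :=
      ((eventually_levelPerm_eq hlim n).and (Filter.eventually_ne_atTop 0)).exists
    have hodd : ∀ i, Odd ((ℓ i).appr m) := fun i =>
      Nat.coprime_two_right.mp (PadicInt.coprime_appr_of_isUnit (hℓ i) hm0)
    calc sgn n h
        = sgnHom n (List.ofFn fun i => g (τ i) ^ (ℓ i).appr m).reverse.prod := by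
          rw [sgnHom_apply, sgn, sgn, hm]
      _ = sgnHom n (List.ofFn g).reverse.prod := (sgnHom n).map_prod_ofFn_perm_pow_odd g τ hodd
      _ = -1 := hg n hn
  · refine H 1 1 (fun _ => isUnit_one) _ (tendsto_const_nhds.congr' ?_)
    filter_upwards [Filter.eventually_ne_atTop 0] with m hm
    simp [PadicInt.appr_one hm]

/-- `g₁⋯g_k` is an odometer iff for every permutation `τ ∈ S_k` and
2-adic units `ℓ₁,…,ℓ_k ∈ ℤ₂ˣ`, `g_{τ(1)}^{ℓ₁}⋯g_{τ(k)}^{ℓ_k}` is an odometer.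
(The paper composes automorphisms left-to-right, so a word `x₁x₂⋯x_m` corresponds
to `(List.ofFn x).reverse.prod` for left-applied permutations; the 2-adic power
`g^ℓ` is the limit in `Ω` of `g^{ℓ_n}` over integer approximations `ℓ_n` of `ℓ`.) -/
theorem prod_odometer_iff_perm_unit_pows (k : ℕ) (hk : 1 ≤ k) (g : Fin k → TreeAut) :
    IsOdometer ((List.ofFn g).reverse.prod) ↔
      ∀ (τ : Equiv.Perm (Fin k)) (ℓ : Fin k → ℤ_[2]), (∀ i, IsUnit (ℓ i)) →
        ∀ h : TreeAut,
          Filter.Tendsto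
            (fun m : ℕ =>
              (List.ofFn (fun i : Fin k => g (τ i) ^ ((ℓ i).appr m))).reverse.prod)
            Filter.atTop (nhds h) →
          IsOdometer h :=
  prod_odometer_iff_perm_unit_pows_general k g

end BinTree
end

section
/- Fix integers r ≥ 3 and 1 < s ≤ r, and define a₁,…,a_r ∈ Ω recursively by a₁ = (a_r, id)σ, a_i = (id, a_{i−1}) for 2 ≤ i ≤ s−1, a_s = (id, a_{s−1})σ, and a_i = (a_{i−1}, id) for s+1 ≤ i ≤ r. Then the product a₁a₂⋯a_r is the identity automorphism of the tree. -/
namespace BinTree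

/-! Write `c = a_r ⋯ a_1` and `c' = a_{r-1} ⋯ a_1 a_r`, a conjugate of `c`. Multiplying out the
recursion, the two swaps coming from `a_1` and `a_s` cancel and `c = (c', id)`. Since `c'` is
conjugate to `c`, it acts trivially on level `n` whenever `c` does, and then `c = (c', id)` acts
trivially on level `n + 1`; so `c` acts trivially on every level. -/

section DescProd

variable {M : Type*} [Monoid M]

def descProd (f : ℕ → M) : ℕ → M
  | 0 => 1
  | n + 1 => f n * descProd f n

lemma descProd_succ (f : ℕ → M) (n : ℕ) : descProd f (n + 1) = f n * descProd f n := rfl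

lemma descProd_succ' (f : ℕ → M) (n : ℕ) :
    descProd f (n + 1) = descProd (fun i => f (i + 1)) n * f 0 := by
  induction n with
  | zero => simp [descProd]
  | succ n ih => rw [descProd_succ, ih, descProd_succ, mul_assoc]

lemma reverse_prod_ofFn_eq_descProd (f : ℕ → M) (n : ℕ) :
    (List.ofFn fun i : Fin n => f i).reverse.prod = descProd f n := by
  induction n with
  | zero => rfl
  | succ n ih =>
    rw [List.ofFn_succ', List.concat_eq_append, List.reverse_append]
    simp [descProd_succ, ih]

lemma isConj_descProd_shift {G : Type*} [Group G] (f : ℕ → G) (n : ℕ) (hf : f n = f 0) :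
    IsConj (descProd (fun i => f (i + 1)) n) (descProd f n) := by
  cases n with
  | zero => rfl
  | succ n =>
    rw [descProd_succ, descProd_succ' f, hf]
    exact isConj_iff.2 ⟨(f 0)⁻¹, by group⟩

end DescProd

lemma wr_mul (g₀ h₀ g₁ h₁ : TreeAut) (t₀ t₁ : Bool) :
    wr g₀ h₀ t₀ * wr g₁ h₁ t₁ =
      wr (cond t₁ (h₀ * g₁) (g₀ * g₁)) (cond t₁ (g₀ * h₁) (h₀ * h₁)) (xor t₀ t₁) := by
  ext v : 2
  cases v with
  | nil => rfl
  | cons x v => cases x <;> cases t₀ <;> cases t₁ <;> rfl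

lemma levelHom_eq_one_iff (n : ℕ) (g : TreeAut) :
    levelHom n g = 1 ↔ ∀ v : Vertex, v.length = n → ap g v = v := by
  refine ⟨fun h v hv => congrArg (fun e => (e ⟨v, hv⟩).1) h, fun h => ?_⟩
  ext ⟨v, hv⟩ : 1
  exact Subtype.ext (h v hv)

lemma eq_one_of_forall_levelHom_eq_one (g : TreeAut) (h : ∀ n, levelHom n g = 1) : g = 1 := by
  ext v : 2
  exact (levelHom_eq_one_iff _ g).1 (h v.length) v rfl

lemma levelHom_succ_wr_eq_one {n : ℕ} {g h : TreeAut} (hg : levelHom n g = 1)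
    (hh : levelHom n h = 1) : levelHom (n + 1) (wr g h false) = 1 := by
  rw [levelHom_eq_one_iff] at hg hh ⊢
  rintro (_ | ⟨x, v⟩) hv
  · simp at hv
  · cases x
    · exact congrArg (false :: ·) (hg v (by simpa using hv))
    · exact congrArg (true :: ·) (hh v (by simpa using hv))

lemma eq_one_of_eq_wr_of_isConj {g g₀ : TreeAut} (hg : g = wr g₀ 1 false) (hc : IsConj g g₀) :
    g = 1 := by
  refine eq_one_of_forall_levelHom_eq_one g fun n => ?_
  induction n with
  | zero => exact Subsingleton.elim _ _
  | succ n ih =>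
    have h₀ : levelHom n g₀ = 1 := isConj_one_left.1 (ih ▸ (levelHom n).map_isConj hc).symm
    rw [hg]
    exact levelHom_succ_wr_eq_one h₀ (map_one _)

lemma descProd_shift_eq_wr (g : ℕ → TreeAut) {r s : ℕ} (hs1 : 1 < s)
    (h1 : g 1 = wr (g 0) 1 true)
    (hmid : ∀ i : ℕ, 2 ≤ i → i ≤ s - 1 → g i = wr 1 (g (i - 1)) false)
    (hs : g s = wr 1 (g (s - 1)) true)
    (hhi : ∀ i : ℕ, s + 1 ≤ i → i ≤ r → g i = wr (g (i - 1)) 1 false)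
    (k : ℕ) (hk : 1 ≤ k) (hkr : k ≤ r) :
    descProd (fun i => g (i + 1)) k = wr (descProd g k) 1 (decide (k < s)) := by
  induction k, hk using Nat.le_induction with
  | base => simp [descProd, h1, hs1]
  | succ k hk ih =>
    rw [descProd_succ, descProd_succ, ih (by omega)]
    rcases lt_trichotomy (k + 1) s with hlt | rfl | hgt
    · rw [hmid (k + 1) (by omega) (by omega), wr_mul]
      simp [hlt, show k < s by omega]
    · rw [hs, wr_mul]
      simp
    · rw [hhi (k + 1) (by omega) hkr, wr_mul]
      simp [show ¬k < s by omega, show ¬k + 1 < s by omega]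

/-- The paper composes left-to-right, whence the reversed product. -/
theorem prod_gens_eq_one_general
    (r s : ℕ) (hs1 : 1 < s) (hsr : s ≤ r)
    (a : ZMod r → TreeAut)
    (ha1 : a 1 = wr (a (r : ZMod r)) 1 true)
    (hmid : ∀ i : ℕ, 2 ≤ i → i ≤ s - 1 → a (i : ZMod r) = wr 1 (a ((i - 1 : ℕ) : ZMod r)) false)
    (has : a (s : ZMod r) = wr 1 (a ((s - 1 : ℕ) : ZMod r)) true)
    (hhi : ∀ i : ℕ, s + 1 ≤ i → i ≤ r → a (i : ZMod r) = wr (a ((i - 1 : ℕ) : ZMod r)) 1 false)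
    :
    (List.ofFn (fun i : Fin r => a (((i : ℕ) + 1 : ℕ) : ZMod r))).reverse.prod = 1 := by
  set g : ℕ → TreeAut := fun i => a i
  have hperiodic : g r = g 0 := by simp [g]
  have hprod : descProd (fun i => g (i + 1)) r = wr (descProd g r) 1 false := by
    simpa [not_lt.2 hsr] using descProd_shift_eq_wr g hs1 (by simpa [g, hperiodic] using ha1)
      hmid has hhi r (by omega) le_rfl
  rw [reverse_prod_ofFn_eq_descProd (fun i => g (i + 1))]
  exact eq_one_of_eq_wr_of_isConj hprod (isConj_descProd_shift g r hperiodic)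

/-- the recursively defined generators satisfy a₁a₂⋯a_r = id
(the paper composes left-to-right, whence the reversed Lean product). -/
theorem prod_gens_eq_one
    (r s : ℕ) (hr : 3 ≤ r) (hs1 : 1 < s) (hsr : s ≤ r)
    (a : ZMod r → TreeAut)
    (ha1 : a 1 = wr (a (r : ZMod r)) 1 true)
    (hmid : ∀ i : ℕ, 2 ≤ i → i ≤ s - 1 → a (i : ZMod r) = wr 1 (a ((i - 1 : ℕ) : ZMod r)) false)
    (has : a (s : ZMod r) = wr 1 (a ((s - 1 : ℕ) : ZMod r)) true)
    (hhi : ∀ i : ℕ, s + 1 ≤ i → i ≤ r → a (i : ZMod r) = wr (a ((i - 1 : ℕ) : ZMod r)) 1 false)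
    :
    (List.ofFn (fun i : Fin r => a (((i : ℕ) + 1 : ℕ) : ZMod r))).reverse.prod = 1 :=
  prod_gens_eq_one_general r s hs1 hsr a ha1 hmid has hhi

end BinTree
end
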